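/- Let A be the BVASS of dimension 3 over counters c, d, d′ with states q₀, q₁, q₂, q₃, q₄, unary rules q₀ →^{+e_d} q₁, q₁ →^{−e_d + 2e_{d′}} q₁, q₁ →^{0} q₂, q₂ →^{−e_{d′} + e_d} q₂, q₃ →^{0} q₀, q₃ →^{−e_c − 2e_d} q₄, and the single split rule q₂ → q₃ + q₃. Then for every m ∈ ℕ, A has a deduction tree whose root is labelled (q₀, (m, 0, 0)) and whose every leaf has state label q₄ if and only if m ≥ 4. -/

import Mathlib

/-- An alternating branching VASS with full zero tests (ABVASS₀):
states `Q`, counters indexed by `ι`, with unary, fork, split, and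
full-zero-test rules. -/
structure ABVASS (Q ι : Type) where
  Tu : Set (Q × (ι → ℤ) × Q)
  Tf : Set (Q × Q × Q)
  Ts : Set (Q × Q × Q)
  Tz : Set (Q × Q)

/-- Configurations: a state together with a vector of naturals. -/
abbrev Config (Q ι : Type) := Q × (ι → ℕ)

/-- Finite deduction trees labelled by configurations, with unary and
binary internal nodes. -/
inductive DTree (Q ι : Type) where
  | leaf : Config Q ι → DTree Q ι
  | node1 : Config Q ι → DTree Q ι → DTree Q ι
  | node2 : Config Q ι → DTree Q ι → DTree Q ι → DTree Q ι

namespace DTree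

variable {Q ι : Type}

/-- The root label of a deduction tree. -/
def root : DTree Q ι → Config Q ι
  | .leaf c => c
  | .node1 c _ => c
  | .node2 c _ _ => c

/-- Height: the maximum number of edges from the root to a leaf. -/
def height : DTree Q ι → ℕ
  | .leaf _ => 0
  | .node1 _ t => t.height + 1
  | .node2 _ t₁ t₂ => max t₁.height t₂.height + 1

/-- The list of leaf labels. -/
def leaves : DTree Q ι → List (Config Q ι)
  | .leaf c => [c]
  | .node1 _ t => t.leaves
  | .node2 _ t₁ t₂ => t₁.leaves ++ t₂.leaves

end DTree

variable {Q ι : Type}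

/-- Unary rule, applied top-down: from `(q, v)` derive `(q₁, v + u)`,
provided `v + u` is non-negative. -/
def UnaryStep (A : ABVASS Q ι) (c c' : Config Q ι) : Prop :=
  ∃ u, (c.1, u, c'.1) ∈ A.Tu ∧ ∀ i, (c'.2 i : ℤ) = (c.2 i : ℤ) + u i

/-- Full zero test: from `(q, 0)` derive `(q₁, 0)`. -/
def ZeroStep (A : ABVASS Q ι) (c c' : Config Q ι) : Prop :=
  (c.1, c'.1) ∈ A.Tz ∧ c.2 = (fun _ => 0) ∧ c'.2 = (fun _ => 0)

/-- Fork (children copy the parent's vector) or split (the parent's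
vector is a sum of the children's). -/
def BinStep (A : ABVASS Q ι) (c c₁ c₂ : Config Q ι) : Prop :=
  ((c.1, c₁.1, c₂.1) ∈ A.Tf ∧ c₁.2 = c.2 ∧ c₂.2 = c.2) ∨
  ((c.1, c₁.1, c₂.1) ∈ A.Ts ∧ c.2 = c₁.2 + c₂.2)

/-- A tree is a valid deduction tree when every internal node's children
are obtained by one of the permitted steps. -/
inductive ValidTree (step1 : Config Q ι → Config Q ι → Prop)
    (step2 : Config Q ι → Config Q ι → Config Q ι → Prop) : DTree Q ι → Prop
  | leaf (c : Config Q ι) : ValidTree step1 step2 (.leaf c)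
  | one {c : Config Q ι} {t : DTree Q ι} :
      step1 c t.root → ValidTree step1 step2 t → ValidTree step1 step2 (.node1 c t)
  | two {c : Config Q ι} {t₁ t₂ : DTree Q ι} :
      step2 c t₁.root t₂.root → ValidTree step1 step2 t₁ → ValidTree step1 step2 t₂ →
      ValidTree step1 step2 (.node2 c t₁ t₂)

/-- Deduction trees of an ABVASS₀ (standard semantics). -/
def IsDeduction (A : ABVASS Q ι) : DTree Q ι → Prop :=
  ValidTree (fun c c' => UnaryStep A c c' ∨ ZeroStep A c c') (BinStep A)

/-- The five states of the example BVASS. -/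
inductive Q5 where
  | q0 | q1 | q2 | q3 | q4
deriving DecidableEq

/-- The unit vector on counter `i` (counters: `0 = c`, `1 = d`, `2 = d'`). -/
def e3 (i : Fin 3) : Fin 3 → ℤ := fun j => if j = i then 1 else 0

/-- The example BVASS of dimension 3 with unary rules
`q₀ →^{+e_d} q₁`, `q₁ →^{-e_d + 2e_{d'}} q₁`, `q₁ →^0 q₂`,
`q₂ →^{-e_{d'} + e_d} q₂`, `q₃ →^0 q₀`, `q₃ →^{-e_c - 2e_d} q₄`,
and the single split rule `q₂ → q₃ + q₃`. -/
def exampleBVASS : ABVASS Q5 (Fin 3) where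
  Tu := {(Q5.q0, e3 1, Q5.q1),
         (Q5.q1, -e3 1 + 2 • e3 2, Q5.q1),
         (Q5.q1, 0, Q5.q2),
         (Q5.q2, -e3 2 + e3 1, Q5.q2),
         (Q5.q3, 0, Q5.q0),
         (Q5.q3, -e3 0 - 2 • e3 1, Q5.q4)}
  Tf := ∅
  Ts := {(Q5.q2, Q5.q3, Q5.q3)}
  Tz := ∅

/-! Counter `c` is never increased and every `q₃ → q₄` step consumes one unit of it, so the
value of `c` at a node bounds the number of leaves below it. From `(q₀, (m, 0, 0))` at least four
leaves are needed: the first round produces only two units of `d` to share between the two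
`q₃`-children, and a `q₃` that cannot fire with `d ≥ 2` has to restart at `q₀`, which costs at
least two more leaves. Conversely, restarting from `(q₃, (c, 1, 0))` doubles `d + 1 = 2` to `4`,
enough for two leaves, which gives a tree with four leaves. -/

namespace ABVASS

variable {Q ι : Type} (A : ABVASS Q ι)

def DeducesInto (c : Config Q ι) (q : Q) : Prop :=
  ∃ D : DTree Q ι, IsDeduction A D ∧ D.root = c ∧ ∀ l ∈ D.leaves, l.1 = q

variable {A}

theorem deducesInto_self (q : Q) (v : ι → ℕ) : A.DeducesInto (q, v) q :=
  ⟨.leaf (q, v), .leaf _, rfl, by simp [DTree.leaves]⟩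

theorem DeducesInto.of_unary {c c' : Config Q ι} {q : Q} {u : ι → ℤ}
    (hu : (c.1, u, c'.1) ∈ A.Tu) (hv : ∀ i, (c'.2 i : ℤ) = c.2 i + u i)
    (h : A.DeducesInto c' q) : A.DeducesInto c q := by
  obtain ⟨D, hD, rfl, hl⟩ := h
  exact ⟨.node1 c D, .one (Or.inl ⟨u, hu, hv⟩) hD, rfl, hl⟩

theorem DeducesInto.of_split {c c₁ c₂ : Config Q ι} {q : Q}
    (hs : (c.1, c₁.1, c₂.1) ∈ A.Ts) (hv : c.2 = c₁.2 + c₂.2)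
    (h₁ : A.DeducesInto c₁ q) (h₂ : A.DeducesInto c₂ q) : A.DeducesInto c q := by
  obtain ⟨D₁, hD₁, rfl, hl₁⟩ := h₁
  obtain ⟨D₂, hD₂, rfl, hl₂⟩ := h₂
  refine ⟨.node2 c D₁ D₂, .two (Or.inr ⟨hs, hv⟩) hD₁ hD₂, rfl, ?_⟩
  simpa [DTree.leaves, or_imp, forall_and] using And.intro hl₁ hl₂

theorem DeducesInto.induction (hf : A.Tf = ∅) (hz : A.Tz = ∅) {q : Q}
    {P : Config Q ι → Prop} (leaf : ∀ v, P (q, v))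
    (unary : ∀ {c c' : Config Q ι} {u : ι → ℤ}, (c.1, u, c'.1) ∈ A.Tu →
      (∀ i, (c'.2 i : ℤ) = c.2 i + u i) → P c' → P c)
    (split : ∀ {c c₁ c₂ : Config Q ι}, (c.1, c₁.1, c₂.1) ∈ A.Ts →
      c.2 = c₁.2 + c₂.2 → P c₁ → P c₂ → P c)
    {c : Config Q ι} (h : A.DeducesInto c q) : P c := by
  obtain ⟨D, hD, rfl, hl⟩ := h
  induction hD with
  | leaf c =>
    obtain ⟨q', v⟩ := c
    obtain rfl : q' = q := hl _ (List.mem_singleton_self _)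
    exact leaf v
  | one hstep _ ih =>
    rcases hstep with ⟨u, hu, hv⟩ | ⟨hz', -⟩
    · exact unary hu hv (ih hl)
    · simp [hz] at hz'
  | two hstep _ _ ih₁ ih₂ =>
    rcases hstep with ⟨hf', -⟩ | ⟨hs, hv⟩
    · simp [hf] at hf'
    · exact split hs hv (ih₁ fun l hl' => hl l (List.mem_append_left _ hl'))
        (ih₂ fun l hl' => hl l (List.mem_append_right _ hl'))

end ABVASS

open ABVASS Q5

/-- A lower bound on the number of `q₄`-leaves of a deduction tree from `(q, v)`, ignoring `c`.
In `q₁` the quantity `2d + d'` is invariant, in `q₂` it is `d + d'`. -/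
def requiredC : Q5 → (Fin 3 → ℕ) → ℕ
  | q0, v => if v 1 + v 2 = 0 then 4 else 2
  | q1, v => if 2 * v 1 + v 2 ≤ 2 then 4 else 2
  | q2, v => if v 1 + v 2 ≤ 2 then 4 else 2
  | q3, v => if 2 ≤ v 1 then 1 else if v 1 + v 2 = 0 then 4 else 2
  | q4, _ => 0

theorem requiredC_le_of_deducesInto {q : Q5} {v : Fin 3 → ℕ}
    (h : exampleBVASS.DeducesInto (q, v) q4) : requiredC q v ≤ v 0 := by
  refine h.induction (P := fun c => requiredC c.1 c.2 ≤ c.2 0) rfl rfl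
    (fun _ => Nat.zero_le _) ?_ ?_
  · rintro ⟨q, v⟩ ⟨q', v'⟩ u hu hv ih
    have h0 := hv 0
    have h1 := hv 1
    have h2 := hv 2
    simp only [exampleBVASS, Set.mem_insert_iff, Set.mem_singleton_iff, Prod.mk.injEq] at hu
    rcases hu with ⟨rfl, rfl, rfl⟩ | ⟨rfl, rfl, rfl⟩ | ⟨rfl, rfl, rfl⟩ | ⟨rfl, rfl, rfl⟩ |
      ⟨rfl, rfl, rfl⟩ | ⟨rfl, rfl, rfl⟩ <;>
    · simp only [e3, Pi.add_apply, Pi.neg_apply, Pi.sub_apply, Pi.smul_apply, Pi.zero_apply,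
        Fin.reduceEq, if_true, if_false, smul_zero, Nat.smul_one_eq_cast, Nat.cast_ofNat]
        at h0 h1 h2
      simp only [requiredC] at ih ⊢
      split_ifs at ih ⊢ <;> omega
  · rintro ⟨q, v⟩ ⟨q₁, v₁⟩ ⟨q₂, v₂⟩ hs hv ih₁ ih₂
    simp only [exampleBVASS, Set.mem_singleton_iff, Prod.mk.injEq] at hs
    obtain ⟨rfl, rfl, rfl⟩ := hs
    have h0 := congrFun hv 0
    have h1 := congrFun hv 1
    have h2 := congrFun hv 2
    simp only [Pi.add_apply] at h0 h1 h2
    simp only [requiredC] at ih₁ ih₂ ⊢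
    split_ifs at ih₁ ih₂ ⊢ <;> omega

section Witness

variable {c d d' : ℕ}

theorem deducesInto_q3_of_two_le : exampleBVASS.DeducesInto (q3, ![c + 1, d + 2, d']) q4 :=
  DeducesInto.of_unary (u := -e3 0 - 2 • e3 1) (c' := (q4, ![c, d, d'])) (by simp [exampleBVASS])
    (by simp [Fin.forall_fin_succ, e3]) (deducesInto_self _ _)

theorem deducesInto_q1_of_transfer (h : exampleBVASS.DeducesInto (q1, ![c, 0, d' + 2 * d]) q4) :
    exampleBVASS.DeducesInto (q1, ![c, d, d']) q4 := by
  induction d generalizing d' with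
  | zero => exact h
  | succ d ih =>
    refine DeducesInto.of_unary (u := -e3 1 + 2 • e3 2) (c' := (q1, ![c, d, d' + 2]))
      (by simp [exampleBVASS]) (by simp [Fin.forall_fin_succ, e3]) (ih ?_)
    rwa [show d' + 2 + 2 * d = d' + 2 * (d + 1) by ring]

theorem deducesInto_q2_of_transfer (h : exampleBVASS.DeducesInto (q2, ![c, d + d', 0]) q4) :
    exampleBVASS.DeducesInto (q2, ![c, d, d']) q4 := by
  induction d' generalizing d with
  | zero => exact h
  | succ d' ih =>
    refine DeducesInto.of_unary (u := -e3 2 + e3 1) (c' := (q2, ![c, d + 1, d']))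
      (by simp [exampleBVASS]) (by simp [Fin.forall_fin_succ, e3]) (ih ?_)
    rwa [show d + 1 + d' = d + (d' + 1) by ring]

theorem deducesInto_q0_of_q2 (h : exampleBVASS.DeducesInto (q2, ![c, 2 * d + d' + 2, 0]) q4) :
    exampleBVASS.DeducesInto (q0, ![c, d, d']) q4 := by
  refine DeducesInto.of_unary (u := e3 1) (c' := (q1, ![c, d + 1, d'])) (by simp [exampleBVASS])
    (by simp [Fin.forall_fin_succ, e3]) (deducesInto_q1_of_transfer ?_)
  refine DeducesInto.of_unary (u := 0) (c' := (q2, ![c, 0, d' + 2 * (d + 1)]))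
    (by simp [exampleBVASS]) (by simp) (deducesInto_q2_of_transfer ?_)
  rwa [show 0 + (d' + 2 * (d + 1)) = 2 * d + d' + 2 by ring]

theorem deducesInto_q3_of_restart (h : exampleBVASS.DeducesInto (q0, ![c, d, d']) q4) :
    exampleBVASS.DeducesInto (q3, ![c, d, d']) q4 :=
  DeducesInto.of_unary (u := 0) (by simp [exampleBVASS]) (by simp) h

theorem deducesInto_q2_of_split {c₁ c₂ d₁ d₂ : ℕ}
    (h₁ : exampleBVASS.DeducesInto (q3, ![c₁, d₁, 0]) q4)
    (h₂ : exampleBVASS.DeducesInto (q3, ![c₂, d₂, 0]) q4) :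
    exampleBVASS.DeducesInto (q2, ![c₁ + c₂, d₁ + d₂, 0]) q4 :=
  DeducesInto.of_split (by simp [exampleBVASS]) (by simp) h₁ h₂

theorem deducesInto_q3_of_d_eq_one : exampleBVASS.DeducesInto (q3, ![c + 2, 1, 0]) q4 :=
  deducesInto_q3_of_restart <| deducesInto_q0_of_q2 <|
    deducesInto_q2_of_split (c₁ := c + 1) (c₂ := 1) deducesInto_q3_of_two_le
      deducesInto_q3_of_two_le

end Witness

/-- For every `m ∈ ℕ`, the example BVASS has a deduction tree whose root
is labelled `(q₀, (m, 0, 0))` and whose every leaf has state label `q₄`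
iff `m ≥ 4`. -/
theorem exampleBVASS_correct (m : ℕ) :
    (∃ D : DTree Q5 (Fin 3), IsDeduction exampleBVASS D ∧
      D.root = (Q5.q0, fun i => if i = 0 then m else 0) ∧
      ∀ l ∈ D.leaves, l.1 = Q5.q4) ↔ 4 ≤ m := by
  constructor
  · intro h
    simpa [requiredC] using requiredC_le_of_deducesInto h
  · intro hm
    obtain ⟨m, rfl⟩ := Nat.exists_eq_add_of_le' hm
    have hroot : (fun i : Fin 3 => if i = 0 then m + 4 else 0) = ![m + 4, 0, 0] := by
      ext i; fin_cases i <;> simp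
    rw [hroot]
    refine deducesInto_q0_of_q2 ?_
    simpa using deducesInto_q2_of_split (deducesInto_q3_of_d_eq_one (c := m))
      (deducesInto_q3_of_d_eq_one (c := 0))
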